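/- For every c ∈ ℝ there exist ℓ > 0 and a function u : [−ℓ, ℓ] → ℝ such that: u is continuously differentiable on [−ℓ, ℓ] and infinitely differentiable on (−ℓ, ℓ); 1 − u'(t)² > 0 and (1 − u'(t)²)^{k−1} ( u''(t) + ((n−2k)/(2k)) (1 − u'(t)²) ) = (n/(2k)) e^{−2k u(t)} for all t ∈ (−ℓ, ℓ); u(−ℓ) = u(ℓ) = c; and u'(t) → ±1 and u''(t) → +∞ as t → ±ℓ, so that u does not extend to a twice continuously differentiable function on [−ℓ, ℓ]. -/

import Mathlib

open Real Set Filter Topology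

noncomputable section NSB18
namespace NSB18

/-- Helper: smooth inverse function. -/
lemma inverse_smooth {F G : ℝ → ℝ} {x d : ℝ} (hF : ContDiffAt ℝ (⊤ : ℕ∞) F x)
    (hd : HasDerivAt F d x) (hd0 : d ≠ 0) (hg : ∀ᶠ z in 𝓝 x, G (F z) = z) :
    ContDiffAt ℝ (⊤ : ℕ∞) G (F x) ∧ HasDerivAt G d⁻¹ (F x) := by
  have h1 : ((⊤ : ℕ∞) : WithTop ℕ∞) ≠ 0 := by
    simp
  have hs : HasStrictDerivAt F (deriv F x) x := hF.hasStrictDerivAt h1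
  rw [hd.deriv] at hs
  have hF' := hd.hasFDerivAt_equiv hd0
  have hinv : ContDiffAt ℝ (⊤ : ℕ∞) (hF.localInverse hF' h1) (F x) :=
    hF.to_localInverse hF' h1
  have hgl : ∀ᶠ z in 𝓝 x, (hF.localInverse hF' h1) (F z) = z :=
    (hF.hasStrictFDerivAt' hF' h1).eventually_left_inverse
  have heq : ∀ᶠ y in 𝓝 (F x), G y = (hF.localInverse hF' h1) y := by
    rw [← hs.map_nhds_eq hd0, eventually_map]
    filter_upwards [hg, hgl] with z h2 h3
    rw [h2, h3]
  exact ⟨hinv.congr_of_eventuallyEq heq, (hs.to_local_left_inverse hd0 hg).hasDerivAt⟩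

variable (n k : ℕ) (c : ℝ)

def f (u : ℝ) : ℝ := exp (-(2*(k:ℝ))*u) * (1 - exp ((n:ℝ)*(u - c)))

def f' (u : ℝ) : ℝ :=
  exp (-(2*(k:ℝ))*u) * (-(2*(k:ℝ))*(1 - exp ((n:ℝ)*(u - c))) - (n:ℝ) * exp ((n:ℝ)*(u - c)))

lemma f_contDiff : ContDiff ℝ (⊤ : ℕ∞) (f n k c) := by
  apply ContDiff.mul
  · exact Real.contDiff_exp.comp (contDiff_const.mul contDiff_id)
  · exact contDiff_const.sub
      (Real.contDiff_exp.comp (contDiff_const.mul (contDiff_id.sub contDiff_const)))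

lemma hasDerivAt_f (u : ℝ) : HasDerivAt (f n k c) (f' n k c u) u := by
  have h1 : HasDerivAt (fun x : ℝ => exp (-(2*(k:ℝ))*x))
      (exp (-(2*(k:ℝ))*u) * (-(2*(k:ℝ)) * 1)) u :=
    ((hasDerivAt_id u).const_mul (-(2*(k:ℝ)))).exp
  have h2 : HasDerivAt (fun x : ℝ => 1 - exp ((n:ℝ)*(x - c)))
      (-(exp ((n:ℝ)*(u - c)) * ((n:ℝ) * 1))) u :=
    ((((hasDerivAt_id u).sub_const c).const_mul (n:ℝ)).exp).const_sub 1
  have := h1.mul h2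
  refine this.congr_deriv ?_
  unfold f'
  ring

lemma f_c : f n k c c = 0 := by simp [f]

lemma f_pos (hn : 0 < n) {u : ℝ} (hu : u < c) : 0 < f n k c u := by
  have hN : (0:ℝ) < n := by exact_mod_cast hn
  have h1 : exp ((n:ℝ)*(u - c)) < 1 := by
    rw [exp_lt_one_iff]; nlinarith
  have h3 := exp_pos (-(2*(k:ℝ))*u)
  have : (0:ℝ) < 1 - exp ((n:ℝ)*(u-c)) := by linarith
  unfold f
  positivity

lemma f'_neg (hn : 0 < n) {u : ℝ} (hu : u ≤ c) : f' n k c u < 0 := by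
  have hN : (0:ℝ) < n := by exact_mod_cast hn
  have h1 : exp ((n:ℝ)*(u - c)) ≤ 1 := by
    rw [exp_le_one_iff]; nlinarith
  have h2 : (0:ℝ) < exp ((n:ℝ)*(u - c)) := exp_pos _
  have h3 : (0:ℝ) < exp (-(2*(k:ℝ))*u) := exp_pos _
  have hK : (0:ℝ) ≤ k := by positivity
  have hb : (-(2*(k:ℝ))*(1 - exp ((n:ℝ)*(u - c))) - (n:ℝ) * exp ((n:ℝ)*(u - c))) < 0 := by
    nlinarith
  exact mul_neg_of_pos_of_neg h3 hb

lemma f_anti (hn : 0 < n) : StrictAntiOn (f n k c) (Iic c) := by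
  apply strictAntiOn_of_deriv_neg (convex_Iic c) ((f_contDiff n k c).continuous.continuousOn)
  intro x hx
  rw [interior_Iic] at hx
  rw [(hasDerivAt_f n k c x).deriv]
  exact f'_neg n k c hn (le_of_lt hx)

lemma f_surj (hn : 0 < n) (hk : 0 < k) {y : ℝ} (hy : 0 ≤ y) : ∃ u ≤ c, f n k c u = y := by
  have hKpos : (0:ℝ) < k := by exact_mod_cast hk
  have hNpos : (0:ℝ) < n := by exact_mod_cast hn
  have h2 : Tendsto (fun u:ℝ => exp (-(2*(k:ℝ))*u)) atBot atTop :=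
    tendsto_exp_atTop.comp (tendsto_id.const_mul_atBot_of_neg (by linarith))
  have h3 : Tendsto (fun u:ℝ => 1 - exp ((n:ℝ)*(u - c))) atBot (𝓝 1) := by
    have : Tendsto (fun u:ℝ => (n:ℝ)*(u - c)) atBot atBot :=
      (tendsto_atBot_add_const_right atBot (-c) tendsto_id).const_mul_atBot hNpos
    simpa using tendsto_const_nhds.sub (Real.tendsto_exp_atBot.comp this)
  have htop : Tendsto (f n k c) atBot atTop := h2.atTop_mul_pos one_pos h3
  obtain ⟨M, hM1, hM2⟩ := ((htop.eventually_ge_atTop y).and (eventually_le_atBot c)).exists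
  have hs := intermediate_value_Icc' hM2 ((f_contDiff n k c).continuous.continuousOn)
  have hyin : y ∈ Icc (f n k c c) (f n k c M) := by
    rw [f_c]; exact ⟨hy, hM1⟩
  obtain ⟨u, hu, hfu⟩ := hs hyin
  exact ⟨u, hu.2, hfu⟩

/-! ### The inverse `W` of `f` -/

open scoped Classical in
def W (y : ℝ) : ℝ := if h : ∃ u ≤ c, f n k c u = y then h.choose else c

lemma W_le {y : ℝ} (h : ∃ u ≤ c, f n k c u = y) : W n k c y ≤ c := by
  rw [W, dif_pos h]; exact h.choose_spec.1

lemma f_W {y : ℝ} (h : ∃ u ≤ c, f n k c u = y) : f n k c (W n k c y) = y := by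
  rw [W, dif_pos h]; exact h.choose_spec.2

lemma W_eq (hn : 0 < n) {u y : ℝ} (hu : u ≤ c) (hf : f n k c u = y) : W n k c y = u := by
  have h : ∃ u ≤ c, f n k c u = y := ⟨u, hu, hf⟩
  exact (f_anti n k c hn).injOn (W_le n k c h) hu (by rw [f_W n k c h, hf])

lemma W_zero (hn : 0 < n) : W n k c 0 = c := W_eq n k c hn le_rfl (f_c n k c)

lemma W_lt (hn : 0 < n) {y : ℝ} (hy : 0 < y) (h : ∃ u ≤ c, f n k c u = y) :
    W n k c y < c := by
  rcases lt_or_eq_of_le (W_le n k c h) with h' | h'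
  · exact h'
  · exfalso; have := f_W n k c h; rw [h', f_c] at this; linarith [this ▸ hy]


lemma W_smooth (hn : 0 < n) (hk : 0 < k) {y : ℝ} (hy : 0 < y) :
    ContDiffAt ℝ (⊤ : ℕ∞) (W n k c) y ∧
      HasDerivAt (W n k c) ((f' n k c (W n k c y))⁻¹) y := by
  have hex : ∃ u ≤ c, f n k c u = y := f_surj n k c hn hk hy.le
  have hu1 : W n k c y < c := W_lt n k c hn hy hex
  have hGf : ∀ᶠ z in 𝓝 (W n k c y), W n k c (f n k c z) = z := by
    filter_upwards [Iio_mem_nhds hu1] with z hz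
    exact W_eq n k c hn (le_of_lt hz) rfl
  have h := inverse_smooth ((f_contDiff n k c).contDiffAt) (hasDerivAt_f n k c (W n k c y))
    (f'_neg n k c hn hu1.le).ne hGf
  rwa [f_W n k c hex] at h

lemma W_cwa (hn : 0 < n) (hk : 0 < k) : ContinuousWithinAt (W n k c) (Ici 0) 0 := by
  rw [ContinuousWithinAt, W_zero n k c hn, tendsto_order]
  constructor
  · intro b hb
    set m := (b + c) / 2 with hm
    have hbm : b < m := by rw [hm]; linarith
    have hmc : m < c := by rw [hm]; linarith
    have hfm : 0 < f n k c m := f_pos n k c hn hmc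
    filter_upwards [self_mem_nhdsWithin, nhdsWithin_le_nhds (Iio_mem_nhds hfm)] with y hy1 hy2
    have hex : ∃ u ≤ c, f n k c u = y := f_surj n k c hn hk hy1
    by_contra hcon
    push_neg at hcon
    have h1 : W n k c y ≤ c := le_trans hcon (le_trans hbm.le hmc.le)
    have h2 := (f_anti n k c hn) (mem_Iic.2 h1) (mem_Iic.2 hmc.le) (lt_of_le_of_lt hcon hbm)
    rw [f_W n k c hex] at h2
    rw [mem_Iio] at hy2
    linarith
  · intro b hb
    filter_upwards [self_mem_nhdsWithin] with y hy1
    exact lt_of_le_of_lt (W_le n k c (f_surj n k c hn hk hy1)) hb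

/-! ### `U` and `Bf` -/

def U (p : ℝ) : ℝ := W n k c ((1 - p^2)^k)

def Bf (p : ℝ) : ℝ := 2*(k:ℝ)*(1-p^2)^(k-1) / (-(f' n k c (U n k c p)))

lemma one_sub_sq_pos {p : ℝ} (hp : p ∈ Ioo (-1:ℝ) 1) : 0 < 1 - p^2 := by
  obtain ⟨h1, h2⟩ := hp; nlinarith

lemma one_sub_sq_nonneg {p : ℝ} (hp : p ∈ Icc (-1:ℝ) 1) : 0 ≤ 1 - p^2 := by
  obtain ⟨h1, h2⟩ := hp; nlinarith

lemma U_ex (hn : 0 < n) (hk : 0 < k) {p : ℝ} (hp : p ∈ Icc (-1:ℝ) 1) :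
    ∃ u ≤ c, f n k c u = (1 - p^2)^k :=
  f_surj n k c hn hk (pow_nonneg (one_sub_sq_nonneg hp) k)

lemma U_le (hn : 0 < n) (hk : 0 < k) {p : ℝ} (hp : p ∈ Icc (-1:ℝ) 1) : U n k c p ≤ c :=
  W_le n k c (U_ex n k c hn hk hp)

lemma U_lt (hn : 0 < n) (hk : 0 < k) {p : ℝ} (hp : p ∈ Ioo (-1:ℝ) 1) : U n k c p < c :=
  W_lt n k c hn (pow_pos (one_sub_sq_pos hp) k) (U_ex n k c hn hk (Ioo_subset_Icc_self hp))

lemma f_U (hn : 0 < n) (hk : 0 < k) {p : ℝ} (hp : p ∈ Icc (-1:ℝ) 1) :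
    f n k c (U n k c p) = (1 - p^2)^k :=
  f_W n k c (U_ex n k c hn hk hp)

lemma f'_U_neg (hn : 0 < n) (hk : 0 < k) {p : ℝ} (hp : p ∈ Icc (-1:ℝ) 1) :
    f' n k c (U n k c p) < 0 :=
  f'_neg n k c hn (U_le n k c hn hk hp)

lemma U_one (hn : 0 < n) (hk : 0 < k) : U n k c 1 = c := by
  have h : ((1:ℝ) - 1^2)^k = 0 := by norm_num [zero_pow hk.ne']
  unfold U
  rw [h, W_zero n k c hn]

lemma U_neg_one (hn : 0 < n) (hk : 0 < k) : U n k c (-1) = c := by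
  have h : ((1:ℝ) - (-1:ℝ)^2)^k = 0 := by norm_num [zero_pow hk.ne']
  unfold U
  rw [h, W_zero n k c hn]

lemma U_even (p : ℝ) : U n k c (-p) = U n k c p := by
  unfold U; rw [neg_sq]

lemma Bf_even (p : ℝ) : Bf n k c (-p) = Bf n k c p := by
  unfold Bf; rw [neg_sq, U_even]

lemma inner_contDiff : ContDiff ℝ (⊤ : ℕ∞) (fun p : ℝ => (1 - p^2)^k) :=
  (contDiff_const.sub (contDiff_id.pow 2)).pow k

lemma U_contDiffAt (hn : 0 < n) (hk : 0 < k) {p : ℝ} (hp : p ∈ Ioo (-1:ℝ) 1) :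
    ContDiffAt ℝ (⊤ : ℕ∞) (U n k c) p :=
  ((W_smooth n k c hn hk (pow_pos (one_sub_sq_pos hp) k)).1).comp p
    (inner_contDiff k).contDiffAt

lemma U_hasDerivAt (hn : 0 < n) (hk : 0 < k) {p : ℝ} (hp : p ∈ Ioo (-1:ℝ) 1) :
    HasDerivAt (U n k c) (p * Bf n k c p) p := by
  have hin : HasDerivAt (fun x : ℝ => (1 - x^2)^k)
      ((k:ℝ) * (1 - p^2)^(k-1) * (-(2*p))) p := by
    have h1 : HasDerivAt (fun x : ℝ => 1 - x^2) (-(2*p)) p := by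
      simpa using ((hasDerivAt_id p).pow 2).const_sub 1
    exact h1.pow k
  have hW := (W_smooth n k c hn hk (pow_pos (one_sub_sq_pos hp) k)).2
  have := hW.comp p hin
  have hne : f' n k c (U n k c p) ≠ 0 :=
    (f'_U_neg n k c hn hk (Ioo_subset_Icc_self hp)).ne
  refine this.congr_deriv ?_
  unfold Bf U
  field_simp

lemma Bf_pos (hn : 0 < n) (hk : 0 < k) {p : ℝ} (hp : p ∈ Ioo (-1:ℝ) 1) :
    0 < Bf n k c p := by
  have h1 : (0:ℝ) < 2*(k:ℝ)*(1-p^2)^(k-1) := by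
    have := one_sub_sq_pos hp
    have hK : (0:ℝ) < k := by exact_mod_cast hk
    positivity
  exact div_pos h1 (by linarith [f'_U_neg n k c hn hk (Ioo_subset_Icc_self hp)])

lemma f'_contDiff : ContDiff ℝ (⊤ : ℕ∞) (f' n k c) := by
  apply ContDiff.mul
  · exact Real.contDiff_exp.comp (contDiff_const.mul contDiff_id)
  · apply ContDiff.sub
    · exact contDiff_const.mul (contDiff_const.sub
        (Real.contDiff_exp.comp (contDiff_const.mul (contDiff_id.sub contDiff_const))))
    · exact contDiff_const.mul
        (Real.contDiff_exp.comp (contDiff_const.mul (contDiff_id.sub contDiff_const)))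

lemma Bf_contDiffAt (hn : 0 < n) (hk : 0 < k) {p : ℝ} (hp : p ∈ Ioo (-1:ℝ) 1) :
    ContDiffAt ℝ (⊤ : ℕ∞) (Bf n k c) p := by
  apply ContDiffAt.div
  · exact (contDiff_const.mul ((contDiff_const.sub (contDiff_id.pow 2)).pow (k-1))).contDiffAt
  · exact (((f'_contDiff n k c).contDiffAt.comp p (U_contDiffAt n k c hn hk hp)).neg)
  · have := f'_U_neg n k c hn hk (Ioo_subset_Icc_self hp)
    linarith

lemma U_contOn (hn : 0 < n) (hk : 0 < k) : ContinuousOn (U n k c) (Icc (-1:ℝ) 1) := by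
  intro p hp
  by_cases hp' : p ∈ Ioo (-1:ℝ) 1
  · exact ((U_contDiffAt n k c hn hk hp').continuousAt).continuousWithinAt
  · have hps : p = 1 ∨ p = -1 := by
      obtain ⟨h1, h2⟩ := hp
      rcases eq_or_lt_of_le h1 with h | h
      · right; exact h.symm
      rcases eq_or_lt_of_le h2 with h' | h'
      · left; exact h'
      · exact absurd ⟨h, h'⟩ hp'
    have hmap : MapsTo (fun q : ℝ => (1 - q^2)^k) (Icc (-1:ℝ) 1) (Ici (0:ℝ)) := by
      intro q hq
      exact pow_nonneg (one_sub_sq_nonneg hq) k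
    have hinner : ContinuousWithinAt (fun q : ℝ => (1 - q^2)^k) (Icc (-1:ℝ) 1) p :=
      (inner_contDiff k).continuous.continuousWithinAt
    have hzero : (1 - p^2)^k = 0 := by
      rcases hps with h | h <;> (rw [h]; norm_num [zero_pow hk.ne'])
    have hW : ContinuousWithinAt (W n k c) (Ici (0:ℝ)) ((1 - p^2)^k) := by
      rw [hzero]; exact W_cwa n k c hn hk
    exact ContinuousWithinAt.comp (g := W n k c) (f := fun q : ℝ => (1 - q^2)^k)
      (x := p) hW hinner hmap

lemma Bf_contOn (hn : 0 < n) (hk : 0 < k) : ContinuousOn (Bf n k c) (Icc (-1:ℝ) 1) := by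
  apply ContinuousOn.div
  · exact Continuous.continuousOn (by fun_prop)
  · exact (((f'_contDiff n k c).continuous.comp_continuousOn (U_contOn n k c hn hk))).neg
  · intro p hp
    have := f'_U_neg n k c hn hk hp
    intro h
    rw [neg_eq_zero] at h
    exact this.ne h

/-! ### `tau` and `ell` -/

def ell : ℝ := ∫ x in (0:ℝ)..1, Bf n k c x

def tau (p : ℝ) : ℝ := ∫ x in (0:ℝ)..p, Bf n k c x

lemma Bf_intble (hn : 0 < n) (hk : 0 < k) {p q : ℝ} (hp : p ∈ Icc (-1:ℝ) 1)
    (hq : q ∈ Icc (-1:ℝ) 1) : IntervalIntegrable (Bf n k c) MeasureTheory.volume p q := by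
  apply ContinuousOn.intervalIntegrable
  exact (Bf_contOn n k c hn hk).mono (uIcc_subset_Icc hp hq)

lemma tau_one : tau n k c 1 = ell n k c := rfl

lemma tau_zero : tau n k c 0 = 0 := intervalIntegral.integral_same

lemma tau_odd (p : ℝ) : tau n k c (-p) = - tau n k c p := by
  unfold tau
  have h := intervalIntegral.integral_comp_neg (a := 0) (b := p) (fun x => Bf n k c x)
  simp only [neg_zero] at h
  have h2 : (∫ x in (0:ℝ)..p, Bf n k c (-x)) = ∫ x in (0:ℝ)..p, Bf n k c x := by
    apply intervalIntegral.integral_congr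
    intro x _
    exact Bf_even n k c x
  have h3 : (∫ x in (-p)..(0:ℝ), Bf n k c x) = -∫ x in (0:ℝ)..(-p), Bf n k c x :=
    intervalIntegral.integral_symm 0 (-p)
  linarith

lemma tau_neg_one : tau n k c (-1) = - ell n k c := by
  rw [tau_odd, tau_one]

lemma ell_pos (hn : 0 < n) (hk : 0 < k) : 0 < ell n k c := by
  apply intervalIntegral.intervalIntegral_pos_of_pos_on
    (Bf_intble n k c hn hk (by norm_num) (by norm_num))
  · intro x hx
    exact Bf_pos n k c hn hk ⟨by linarith [hx.1], hx.2⟩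
  · norm_num

lemma tau_strictMonoOn (hn : 0 < n) (hk : 0 < k) :
    StrictMonoOn (tau n k c) (Icc (-1:ℝ) 1) := by
  intro p hp q hq hpq
  have h : tau n k c q - tau n k c p = ∫ x in p..q, Bf n k c x := by
    unfold tau
    rw [← intervalIntegral.integral_add_adjacent_intervals
      (Bf_intble n k c hn hk (by norm_num) hp) (Bf_intble n k c hn hk hp hq)]
    ring
  have hpos : 0 < ∫ x in p..q, Bf n k c x := by
    apply intervalIntegral.intervalIntegral_pos_of_pos_on
      (Bf_intble n k c hn hk hp hq) _ hpq
    intro x hx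
    exact Bf_pos n k c hn hk ⟨lt_of_le_of_lt hp.1 hx.1, lt_of_lt_of_le hx.2 hq.2⟩
  linarith

lemma tau_contOn (hn : 0 < n) (hk : 0 < k) : ContinuousOn (tau n k c) (Icc (-1:ℝ) 1) := by
  have := intervalIntegral.continuousOn_primitive_interval'
    (μ := MeasureTheory.volume) (f := Bf n k c) (b₁ := (-1:ℝ)) (b₂ := (1:ℝ)) (a := (0:ℝ))
    (Bf_intble n k c hn hk (by norm_num) (by norm_num))
    (by rw [uIcc_of_le (by norm_num : (-1:ℝ) ≤ 1)]; norm_num)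
  rwa [uIcc_of_le (by norm_num : (-1:ℝ) ≤ 1)] at this

lemma tau_hasStrictDerivAt (hn : 0 < n) (hk : 0 < k) {p : ℝ} (hp : p ∈ Ioo (-1:ℝ) 1) :
    HasStrictDerivAt (tau n k c) (Bf n k c p) p := by
  apply intervalIntegral.integral_hasStrictDerivAt_right
    (Bf_intble n k c hn hk (by norm_num) (Ioo_subset_Icc_self hp))
  · apply ContinuousOn.stronglyMeasurableAtFilter (s := Ioo (-1:ℝ) 1) isOpen_Ioo
    · intro q hq
      exact ((Bf_contDiffAt n k c hn hk hq).continuousAt).continuousWithinAt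
    · exact hp
  · exact (Bf_contDiffAt n k c hn hk hp).continuousAt

lemma tau_contDiffOn (hn : 0 < n) (hk : 0 < k) :
    ContDiffOn ℝ (⊤ : ℕ∞) (tau n k c) (Ioo (-1:ℝ) 1) := by
  rw [contDiffOn_infty_iff_deriv_of_isOpen isOpen_Ioo]
  constructor
  · intro p hp
    exact ((tau_hasStrictDerivAt n k c hn hk hp).hasDerivAt.differentiableAt).differentiableWithinAt
  · apply ContDiffOn.congr (f := Bf n k c)
    · intro p hp
      exact (Bf_contDiffAt n k c hn hk hp).contDiffWithinAt
    · intro p hp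
      exact (tau_hasStrictDerivAt n k c hn hk hp).hasDerivAt.deriv


/-! ### `P`: inverse of `tau`, and the solution `uu` -/

open scoped Classical in
def P (t : ℝ) : ℝ :=
  if h : ∃ p ∈ Icc (-1:ℝ) 1, tau n k c p = t then h.choose
  else if t < 0 then -1 else 1

lemma P_spec {t : ℝ} (h : ∃ p ∈ Icc (-1:ℝ) 1, tau n k c p = t) :
    P n k c t ∈ Icc (-1:ℝ) 1 ∧ tau n k c (P n k c t) = t := by
  rw [P, dif_pos h]; exact ⟨h.choose_spec.1, h.choose_spec.2⟩

lemma P_ex (hn : 0 < n) (hk : 0 < k) {t : ℝ}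
    (ht : t ∈ Icc (-(ell n k c)) (ell n k c)) :
    ∃ p ∈ Icc (-1:ℝ) 1, tau n k c p = t := by
  have hiv := intermediate_value_Icc (by norm_num : (-1:ℝ) ≤ 1) (tau_contOn n k c hn hk)
  rw [tau_neg_one, tau_one] at hiv
  obtain ⟨p, hp, hp2⟩ := hiv ht
  exact ⟨p, hp, hp2⟩

lemma P_eq (hn : 0 < n) (hk : 0 < k) {p t : ℝ} (hp : p ∈ Icc (-1:ℝ) 1)
    (hpt : tau n k c p = t) : P n k c t = p := by
  have h : ∃ q ∈ Icc (-1:ℝ) 1, tau n k c q = t := ⟨p, hp, hpt⟩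
  have hs := P_spec n k c h
  exact (tau_strictMonoOn n k c hn hk).injOn hs.1 hp (hs.2.trans hpt.symm)

lemma P_ell (hn : 0 < n) (hk : 0 < k) : P n k c (ell n k c) = 1 :=
  P_eq n k c hn hk (by norm_num) (tau_one n k c)

lemma P_neg_ell (hn : 0 < n) (hk : 0 < k) : P n k c (-(ell n k c)) = -1 :=
  P_eq n k c hn hk (by norm_num) (tau_neg_one n k c)

lemma P_mem_Ioo (hn : 0 < n) (hk : 0 < k) {t : ℝ}
    (ht : t ∈ Ioo (-(ell n k c)) (ell n k c)) : P n k c t ∈ Ioo (-1:ℝ) 1 := by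
  have hs := P_spec n k c (P_ex n k c hn hk (Ioo_subset_Icc_self ht))
  constructor
  · rcases lt_or_eq_of_le hs.1.1 with h | h
    · exact h
    · exfalso
      have := hs.2
      rw [← h, tau_neg_one] at this
      exact ht.1.ne this
  · rcases lt_or_eq_of_le hs.1.2 with h | h
    · exact h
    · exfalso
      have := hs.2
      rw [h, tau_one] at this
      exact ht.2.ne' this

lemma P_smooth (hn : 0 < n) (hk : 0 < k) {t : ℝ}
    (ht : t ∈ Ioo (-(ell n k c)) (ell n k c)) :
    ContDiffAt ℝ (⊤ : ℕ∞) (P n k c) t ∧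
      HasDerivAt (P n k c) ((Bf n k c (P n k c t))⁻¹) t := by
  have hp : P n k c t ∈ Ioo (-1:ℝ) 1 := P_mem_Ioo n k c hn hk ht
  have htau : tau n k c (P n k c t) = t :=
    (P_spec n k c (P_ex n k c hn hk (Ioo_subset_Icc_self ht))).2
  have hev : ∀ᶠ q in 𝓝 (P n k c t), P n k c (tau n k c q) = q := by
    filter_upwards [Ioo_mem_nhds hp.1 hp.2] with q hq
    exact P_eq n k c hn hk (Ioo_subset_Icc_self hq) rfl
  have hct : ContDiffAt ℝ (⊤ : ℕ∞) (tau n k c) (P n k c t) :=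
    (tau_contDiffOn n k c hn hk).contDiffAt (Ioo_mem_nhds hp.1 hp.2)
  have h := inverse_smooth hct (tau_hasStrictDerivAt n k c hn hk hp).hasDerivAt
    (Bf_pos n k c hn hk hp).ne' hev
  rwa [htau] at h

lemma P_tendsto_top (hn : 0 < n) (hk : 0 < k) :
    Tendsto (P n k c) (𝓝[<] (ell n k c)) (𝓝 1) := by
  have hl := ell_pos n k c hn hk
  rw [tendsto_order]
  constructor
  · intro b hb
    set q := (max b (-1) + 1)/2 with hq
    have hq1 : -1 < q := by
      have : (-1:ℝ) ≤ max b (-1) := le_max_right _ _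
      rw [hq]; linarith
    have hq2 : q < 1 := by
      have : max b (-1) < 1 := max_lt hb (by norm_num)
      rw [hq]; linarith
    have hbq : b < q := by
      have : b ≤ max b (-1) := le_max_left _ _
      rw [hq]; linarith
    have hτq : tau n k c q < ell n k c := by
      have := tau_strictMonoOn n k c hn hk
        (⟨hq1.le, hq2.le⟩ : q ∈ Icc (-1:ℝ) 1) (by norm_num : (1:ℝ) ∈ Icc (-1:ℝ) 1) hq2
      rwa [tau_one] at this
    filter_upwards [self_mem_nhdsWithin,
      nhdsWithin_le_nhds (Ioi_mem_nhds hτq),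
      nhdsWithin_le_nhds (Ioi_mem_nhds (by linarith : -(ell n k c) < ell n k c))]
      with t ht1 ht2 ht3
    have htIcc : t ∈ Icc (-(ell n k c)) (ell n k c) := ⟨le_of_lt ht3, le_of_lt ht1⟩
    have hs := P_spec n k c (P_ex n k c hn hk htIcc)
    by_contra hcon
    push_neg at hcon
    have hPq : P n k c t ≤ q := le_trans hcon hbq.le
    have := (tau_strictMonoOn n k c hn hk).monotoneOn hs.1 ⟨hq1.le, hq2.le⟩ hPq
    rw [hs.2] at this
    exact absurd this (not_le_of_gt ht2)
  · intro b hb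
    filter_upwards [self_mem_nhdsWithin,
      nhdsWithin_le_nhds (Ioi_mem_nhds (by linarith : -(ell n k c) < ell n k c))]
      with t ht1 ht3
    have hs := P_spec n k c (P_ex n k c hn hk ⟨le_of_lt ht3, le_of_lt ht1⟩)
    exact lt_of_le_of_lt hs.1.2 hb

lemma P_tendsto_bot (hn : 0 < n) (hk : 0 < k) :
    Tendsto (P n k c) (𝓝[>] (-(ell n k c))) (𝓝 (-1)) := by
  have hl := ell_pos n k c hn hk
  rw [tendsto_order]
  constructor
  · intro b hb
    filter_upwards [self_mem_nhdsWithin,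
      nhdsWithin_le_nhds (Iio_mem_nhds (by linarith : -(ell n k c) < ell n k c))]
      with t ht1 ht3
    have hs := P_spec n k c (P_ex n k c hn hk ⟨le_of_lt ht1, le_of_lt ht3⟩)
    exact lt_of_lt_of_le hb hs.1.1
  · intro b hb
    set q := (min b 1 + (-1))/2 with hq
    have hq1 : -1 < q := by
      have : (-1:ℝ) < min b 1 := lt_min hb (by norm_num)
      rw [hq]; linarith
    have hq2 : q < 1 := by
      have : min b 1 ≤ 1 := min_le_right _ _
      rw [hq]; linarith
    have hbq : q < b := by
      have : min b 1 ≤ b := min_le_left _ _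
      rw [hq]; linarith
    have hτq : -(ell n k c) < tau n k c q := by
      have := tau_strictMonoOn n k c hn hk
        (by norm_num : (-1:ℝ) ∈ Icc (-1:ℝ) 1) (⟨hq1.le, hq2.le⟩ : q ∈ Icc (-1:ℝ) 1) hq1
      rwa [tau_neg_one] at this
    filter_upwards [self_mem_nhdsWithin,
      nhdsWithin_le_nhds (Iio_mem_nhds hτq),
      nhdsWithin_le_nhds (Iio_mem_nhds (by linarith : -(ell n k c) < ell n k c))]
      with t ht1 ht2 ht3
    have htIcc : t ∈ Icc (-(ell n k c)) (ell n k c) := ⟨le_of_lt ht1, le_of_lt ht3⟩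
    have hs := P_spec n k c (P_ex n k c hn hk htIcc)
    by_contra hcon
    push_neg at hcon
    have hPq : q ≤ P n k c t := le_trans hbq.le hcon
    have := (tau_strictMonoOn n k c hn hk).monotoneOn ⟨hq1.le, hq2.le⟩ hs.1 hPq
    rw [hs.2] at this
    exact absurd this (not_le_of_gt ht2)

def uu (t : ℝ) : ℝ := U n k c (P n k c t)

lemma uu_ell (hn : 0 < n) (hk : 0 < k) : uu n k c (ell n k c) = c := by
  rw [uu, P_ell n k c hn hk, U_one n k c hn hk]

lemma uu_neg_ell (hn : 0 < n) (hk : 0 < k) : uu n k c (-(ell n k c)) = c := by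
  rw [uu, P_neg_ell n k c hn hk, U_neg_one n k c hn hk]

lemma uu_hasDerivAt (hn : 0 < n) (hk : 0 < k) {t : ℝ}
    (ht : t ∈ Ioo (-(ell n k c)) (ell n k c)) :
    HasDerivAt (uu n k c) (P n k c t) t := by
  have hp : P n k c t ∈ Ioo (-1:ℝ) 1 := P_mem_Ioo n k c hn hk ht
  have h := (U_hasDerivAt n k c hn hk hp).comp t (P_smooth n k c hn hk ht).2
  have hBne : Bf n k c (P n k c t) ≠ 0 := (Bf_pos n k c hn hk hp).ne'
  have : P n k c t * Bf n k c (P n k c t) * (Bf n k c (P n k c t))⁻¹ = P n k c t := by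
    field_simp
  rwa [this] at h

lemma deriv_uu (hn : 0 < n) (hk : 0 < k) {t : ℝ}
    (ht : t ∈ Ioo (-(ell n k c)) (ell n k c)) :
    deriv (uu n k c) t = P n k c t := (uu_hasDerivAt n k c hn hk ht).deriv

lemma hasDerivAt_deriv_uu (hn : 0 < n) (hk : 0 < k) {t : ℝ}
    (ht : t ∈ Ioo (-(ell n k c)) (ell n k c)) :
    HasDerivAt (deriv (uu n k c)) ((Bf n k c (P n k c t))⁻¹) t := by
  apply (P_smooth n k c hn hk ht).2.congr_of_eventuallyEq
  filter_upwards [Ioo_mem_nhds ht.1 ht.2] with s hs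
  exact deriv_uu n k c hn hk hs

lemma deriv2_uu (hn : 0 < n) (hk : 0 < k) {t : ℝ}
    (ht : t ∈ Ioo (-(ell n k c)) (ell n k c)) :
    deriv (deriv (uu n k c)) t = (Bf n k c (P n k c t))⁻¹ :=
  (hasDerivAt_deriv_uu n k c hn hk ht).deriv

lemma uu_contDiffOn (hn : 0 < n) (hk : 0 < k) :
    ContDiffOn ℝ (⊤ : ℕ∞) (uu n k c) (Ioo (-(ell n k c)) (ell n k c)) := by
  intro t ht
  exact (((U_contDiffAt n k c hn hk (P_mem_Ioo n k c hn hk ht)).comp t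
    (P_smooth n k c hn hk ht).1)).contDiffWithinAt

lemma key_identity (hn : 0 < n) (hk2 : 2 ≤ k) {p : ℝ} (hp : p ∈ Ioo (-1:ℝ) 1) :
    (1 - p^2)^(k-1) * ((Bf n k c p)⁻¹ + (((n:ℝ) - 2*(k:ℝ))/(2*(k:ℝ))) * (1 - p^2))
      = ((n:ℝ)/(2*(k:ℝ))) * exp (-(2*(k:ℝ)) * U n k c p) := by
  have hk : 0 < k := by omega
  have hK : (0:ℝ) < k := by exact_mod_cast hk
  have hsq := one_sub_sq_pos hp
  have hnum : (0:ℝ) < (1 - p^2)^(k-1) := pow_pos hsq (k-1)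
  have hf' := f'_U_neg n k c hn hk (Ioo_subset_Icc_self hp)
  have hfU := f_U n k c hn hk (Ioo_subset_Icc_self hp)
  have hpow : (1 - p^2)^(k-1) * (1 - p^2) = (1 - p^2)^k := by
    rw [← pow_succ]
    congr 1
    omega
  have hBinv : (Bf n k c p)⁻¹
      = (-(f' n k c (U n k c p))) / (2*(k:ℝ)*(1-p^2)^(k-1)) := by
    rw [Bf, inv_div]
  rw [hBinv]
  simp only [f', f] at hfU ⊢
  set u := U n k c p
  set A := exp (-(2*(k:ℝ))*u) with hA
  set E := exp ((n:ℝ)*(u - c)) with hE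
  have h2 : (1 - p^2)^(k-1) * (1 - p^2) = A * (1 - E) := by rw [hpow, ← hfU]
  have hne1 : (2*(k:ℝ)) ≠ 0 := by positivity
  have hne2 : ((1:ℝ) - p^2)^(k-1) ≠ 0 := ne_of_gt hnum
  field_simp
  linear_combination ((n:ℝ)-2*(k:ℝ)) * h2


/-! ### Boundary behavior -/

lemma Bf_one (hk2 : 2 ≤ k) : Bf n k c 1 = 0 := by
  have h : ((1:ℝ) - 1^2)^(k-1) = 0 := by
    have h0 : ((1:ℝ) - 1^2) = 0 := by norm_num
    rw [h0]
    exact zero_pow (by omega)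
  rw [Bf, h]
  simp

lemma Bf_neg_one (hk2 : 2 ≤ k) : Bf n k c (-1) = 0 := by
  rw [show (-1:ℝ) = -(1:ℝ) from rfl, Bf_even, Bf_one n k c hk2]

lemma eventually_Icc_top (hn : 0 < n) (hk : 0 < k) :
    ∀ᶠ t in 𝓝[<] (ell n k c), t ∈ Icc (-(ell n k c)) (ell n k c) := by
  have hl := ell_pos n k c hn hk
  filter_upwards [self_mem_nhdsWithin,
    nhdsWithin_le_nhds (Ioi_mem_nhds (by linarith : -(ell n k c) < ell n k c))]
    with t ht1 ht2
  exact ⟨le_of_lt ht2, le_of_lt ht1⟩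

lemma eventually_Ioo_top (hn : 0 < n) (hk : 0 < k) :
    ∀ᶠ t in 𝓝[<] (ell n k c), t ∈ Ioo (-(ell n k c)) (ell n k c) := by
  have hl := ell_pos n k c hn hk
  filter_upwards [self_mem_nhdsWithin,
    nhdsWithin_le_nhds (Ioi_mem_nhds (by linarith : -(ell n k c) < ell n k c))]
    with t ht1 ht2
  exact ⟨ht2, ht1⟩

lemma eventually_Icc_bot (hn : 0 < n) (hk : 0 < k) :
    ∀ᶠ t in 𝓝[>] (-(ell n k c)), t ∈ Icc (-(ell n k c)) (ell n k c) := by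
  have hl := ell_pos n k c hn hk
  filter_upwards [self_mem_nhdsWithin,
    nhdsWithin_le_nhds (Iio_mem_nhds (by linarith : -(ell n k c) < ell n k c))]
    with t ht1 ht2
  exact ⟨le_of_lt ht1, le_of_lt ht2⟩

lemma eventually_Ioo_bot (hn : 0 < n) (hk : 0 < k) :
    ∀ᶠ t in 𝓝[>] (-(ell n k c)), t ∈ Ioo (-(ell n k c)) (ell n k c) := by
  have hl := ell_pos n k c hn hk
  filter_upwards [self_mem_nhdsWithin,
    nhdsWithin_le_nhds (Iio_mem_nhds (by linarith : -(ell n k c) < ell n k c))]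
    with t ht1 ht2
  exact ⟨ht1, ht2⟩

lemma BfP_tendsto_top (hn : 0 < n) (hk2 : 2 ≤ k) :
    Tendsto (fun t => Bf n k c (P n k c t)) (𝓝[<] (ell n k c)) (𝓝[>] (0:ℝ)) := by
  have hk : 0 < k := by omega
  rw [tendsto_nhdsWithin_iff]
  constructor
  · have hc : ContinuousWithinAt (Bf n k c) (Icc (-1:ℝ) 1) 1 :=
      Bf_contOn n k c hn hk 1 (by norm_num)
    have h1 : Tendsto (Bf n k c) (𝓝[Icc (-1:ℝ) 1] 1) (𝓝 0) := by
      have := hc.tendsto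
      rwa [Bf_one n k c hk2] at this
    apply h1.comp
    rw [tendsto_nhdsWithin_iff]
    constructor
    · exact P_tendsto_top n k c hn hk
    · filter_upwards [eventually_Icc_top n k c hn hk] with t ht
      exact (P_spec n k c (P_ex n k c hn hk ht)).1
  · filter_upwards [eventually_Ioo_top n k c hn hk] with t ht
    exact Bf_pos n k c hn hk (P_mem_Ioo n k c hn hk ht)

lemma BfP_tendsto_bot (hn : 0 < n) (hk2 : 2 ≤ k) :
    Tendsto (fun t => Bf n k c (P n k c t)) (𝓝[>] (-(ell n k c))) (𝓝[>] (0:ℝ)) := by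
  have hk : 0 < k := by omega
  rw [tendsto_nhdsWithin_iff]
  constructor
  · have hc : ContinuousWithinAt (Bf n k c) (Icc (-1:ℝ) 1) (-1) :=
      Bf_contOn n k c hn hk (-1) (by norm_num)
    have h1 : Tendsto (Bf n k c) (𝓝[Icc (-1:ℝ) 1] (-1)) (𝓝 0) := by
      have := hc.tendsto
      rwa [Bf_neg_one n k c hk2] at this
    apply h1.comp
    rw [tendsto_nhdsWithin_iff]
    constructor
    · exact P_tendsto_bot n k c hn hk
    · filter_upwards [eventually_Icc_bot n k c hn hk] with t ht
      exact (P_spec n k c (P_ex n k c hn hk ht)).1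
  · filter_upwards [eventually_Ioo_bot n k c hn hk] with t ht
    exact Bf_pos n k c hn hk (P_mem_Ioo n k c hn hk ht)

lemma deriv2_tendsto_top (hn : 0 < n) (hk2 : 2 ≤ k) :
    Tendsto (deriv (deriv (uu n k c))) (𝓝[<] (ell n k c)) atTop := by
  have hk : 0 < k := by omega
  apply Tendsto.congr' _ (tendsto_inv_nhdsGT_zero.comp (BfP_tendsto_top n k c hn hk2))
  filter_upwards [eventually_Ioo_top n k c hn hk] with t ht
  exact (deriv2_uu n k c hn hk ht).symm

lemma deriv2_tendsto_bot (hn : 0 < n) (hk2 : 2 ≤ k) :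
    Tendsto (deriv (deriv (uu n k c))) (𝓝[>] (-(ell n k c))) atTop := by
  have hk : 0 < k := by omega
  apply Tendsto.congr' _ (tendsto_inv_nhdsGT_zero.comp (BfP_tendsto_bot n k c hn hk2))
  filter_upwards [eventually_Ioo_bot n k c hn hk] with t ht
  exact (deriv2_uu n k c hn hk ht).symm

lemma deriv_uu_tendsto_top (hn : 0 < n) (hk : 0 < k) :
    Tendsto (deriv (uu n k c)) (𝓝[<] (ell n k c)) (𝓝 1) := by
  apply Tendsto.congr' _ (P_tendsto_top n k c hn hk)
  filter_upwards [eventually_Ioo_top n k c hn hk] with t ht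
  exact (deriv_uu n k c hn hk ht).symm

lemma deriv_uu_tendsto_bot (hn : 0 < n) (hk : 0 < k) :
    Tendsto (deriv (uu n k c)) (𝓝[>] (-(ell n k c))) (𝓝 (-1)) := by
  apply Tendsto.congr' _ (P_tendsto_bot n k c hn hk)
  filter_upwards [eventually_Ioo_bot n k c hn hk] with t ht
  exact (deriv_uu n k c hn hk ht).symm

/-! ### `C¹` regularity up to the boundary -/

lemma P_contOn (hn : 0 < n) (hk : 0 < k) :
    ContinuousOn (P n k c) (Icc (-(ell n k c)) (ell n k c)) := by
  have hl := ell_pos n k c hn hk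
  intro t ht
  by_cases ht' : t ∈ Ioo (-(ell n k c)) (ell n k c)
  · exact ((P_smooth n k c hn hk ht').1.continuousAt).continuousWithinAt
  · have hts : t = ell n k c ∨ t = -(ell n k c) := by
      obtain ⟨h1, h2⟩ := ht
      rcases eq_or_lt_of_le h1 with h | h
      · right; exact h.symm
      rcases eq_or_lt_of_le h2 with h' | h'
      · left; exact h'
      · exact absurd ⟨h, h'⟩ ht'
    rcases hts with h | h
    · subst h
      have h1 : ContinuousWithinAt (P n k c) (Iio (ell n k c)) (ell n k c) := by
        rw [ContinuousWithinAt, P_ell n k c hn hk]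
        exact P_tendsto_top n k c hn hk
      apply h1.insert.mono
      intro s hs
      rcases eq_or_lt_of_le hs.2 with h' | h'
      · exact mem_insert_iff.2 (Or.inl h')
      · exact mem_insert_iff.2 (Or.inr h')
    · subst h
      have h1 : ContinuousWithinAt (P n k c) (Ioi (-(ell n k c))) (-(ell n k c)) := by
        rw [ContinuousWithinAt, P_neg_ell n k c hn hk]
        exact P_tendsto_bot n k c hn hk
      apply h1.insert.mono
      intro s hs
      rcases eq_or_lt_of_le hs.1 with h' | h'
      · exact mem_insert_iff.2 (Or.inl h'.symm)
      · exact mem_insert_iff.2 (Or.inr h')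

lemma uu_contOn (hn : 0 < n) (hk : 0 < k) :
    ContinuousOn (uu n k c) (Icc (-(ell n k c)) (ell n k c)) := by
  apply (U_contOn n k c hn hk).comp (P_contOn n k c hn hk)
  intro t ht
  exact (P_spec n k c (P_ex n k c hn hk ht)).1

lemma uu_hasDerivWithinAt (hn : 0 < n) (hk : 0 < k) {t : ℝ}
    (ht : t ∈ Icc (-(ell n k c)) (ell n k c)) :
    HasDerivWithinAt (uu n k c) (P n k c t)
      (Icc (-(ell n k c)) (ell n k c)) t := by
  have hl := ell_pos n k c hn hk
  by_cases ht' : t ∈ Ioo (-(ell n k c)) (ell n k c)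
  · exact (uu_hasDerivAt n k c hn hk ht').hasDerivWithinAt
  · have hts : t = ell n k c ∨ t = -(ell n k c) := by
      obtain ⟨h1, h2⟩ := ht
      rcases eq_or_lt_of_le h1 with h | h
      · right; exact h.symm
      rcases eq_or_lt_of_le h2 with h' | h'
      · left; exact h'
      · exact absurd ⟨h, h'⟩ ht'
    have hdiff : DifferentiableOn ℝ (uu n k c) (Ioo (-(ell n k c)) (ell n k c)) :=
      fun s hs => (uu_hasDerivAt n k c hn hk hs).differentiableAt.differentiableWithinAt
    rcases hts with h | h
    · subst h
      rw [P_ell n k c hn hk]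
      have h1 : HasDerivWithinAt (uu n k c) 1 (Iic (ell n k c)) (ell n k c) := by
        apply hasDerivWithinAt_Iic_of_tendsto_deriv hdiff
        · exact (uu_contOn n k c hn hk (ell n k c)
            (by constructor <;> linarith)).mono Ioo_subset_Icc_self
        · exact Ioo_mem_nhdsLT_of_mem ⟨by linarith, le_rfl⟩
        · exact deriv_uu_tendsto_top n k c hn hk
      exact h1.mono Icc_subset_Iic_self
    · subst h
      rw [P_neg_ell n k c hn hk]
      have h1 : HasDerivWithinAt (uu n k c) (-1) (Ici (-(ell n k c))) (-(ell n k c)) := by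
        apply hasDerivWithinAt_Ici_of_tendsto_deriv hdiff
        · exact (uu_contOn n k c hn hk (-(ell n k c))
            (by constructor <;> linarith)).mono Ioo_subset_Icc_self
        · exact Ioo_mem_nhdsGT_of_mem ⟨le_rfl, by linarith⟩
        · exact deriv_uu_tendsto_bot n k c hn hk
      exact h1.mono Icc_subset_Ici_self

lemma derivWithin_uu (hn : 0 < n) (hk : 0 < k) {t : ℝ}
    (ht : t ∈ Icc (-(ell n k c)) (ell n k c)) :
    derivWithin (uu n k c) (Icc (-(ell n k c)) (ell n k c)) t = P n k c t := by
  have hl := ell_pos n k c hn hk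
  exact (uu_hasDerivWithinAt n k c hn hk ht).derivWithin
    (uniqueDiffOn_Icc (by linarith) t ht)

lemma uu_contDiffOn_one (hn : 0 < n) (hk : 0 < k) :
    ContDiffOn ℝ 1 (uu n k c) (Icc (-(ell n k c)) (ell n k c)) := by
  have hl := ell_pos n k c hn hk
  have hud : UniqueDiffOn ℝ (Icc (-(ell n k c)) (ell n k c)) :=
    uniqueDiffOn_Icc (by linarith)
  rw [show (1 : WithTop ℕ∞) = (0 : WithTop ℕ∞) + 1 from rfl,
    contDiffOn_succ_iff_derivWithin hud]
  refine ⟨fun t ht => (uu_hasDerivWithinAt n k c hn hk ht).differentiableWithinAt, ?_, ?_⟩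
  · intro h; exact absurd h (by simp)
  · rw [contDiffOn_zero]
    exact (P_contOn n k c hn hk).congr (fun t ht => derivWithin_uu n k c hn hk ht)


/-! ### No `C²` extension -/

lemma no_C2_extension (hn : 0 < n) (hk2 : 2 ≤ k) :
    ¬ ∃ v : ℝ → ℝ, ContDiffOn ℝ 2 v (Icc (-(ell n k c)) (ell n k c)) ∧
      EqOn (uu n k c) v (Icc (-(ell n k c)) (ell n k c)) := by
  have hk : 0 < k := by omega
  have hl := ell_pos n k c hn hk
  rintro ⟨v, hv, heq⟩
  set I := Icc (-(ell n k c)) (ell n k c) with hI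
  have hud : UniqueDiffOn ℝ I := uniqueDiffOn_Icc (by linarith)
  have h1 : ContDiffOn ℝ 1 (derivWithin v I) I := hv.derivWithin hud (by norm_num)
  have h2 : ContinuousOn (derivWithin (derivWithin v I) I) I :=
    h1.continuousOn_derivWithin hud le_rfl
  set D2 := derivWithin (derivWithin v I) I with hD2
  have hcw : ContinuousWithinAt D2 I (ell n k c) :=
    h2 _ (right_mem_Icc.2 (by linarith))
  have hIoo : Ioo (-(ell n k c)) (ell n k c) ∈ 𝓝[<] (ell n k c) :=
    Ioo_mem_nhdsLT_of_mem ⟨by linarith, le_rfl⟩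
  have hle : (𝓝[<] (ell n k c)) ≤ 𝓝[Ioo (-(ell n k c)) (ell n k c)] (ell n k c) :=
    nhdsWithin_le_of_mem hIoo
  have ht1 : Tendsto D2 (𝓝[<] (ell n k c)) (𝓝 (D2 (ell n k c))) :=
    ((hcw.mono Ioo_subset_Icc_self).tendsto).mono_left hle
  have hEq : ∀ᶠ t in 𝓝[<] (ell n k c), D2 t = deriv (deriv (uu n k c)) t := by
    filter_upwards [eventually_Ioo_top n k c hn hk] with t ht
    have hIN : I ∈ 𝓝 t := Icc_mem_nhds ht.1 ht.2
    have e1 : derivWithin v I =ᶠ[𝓝 t] deriv v := by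
      filter_upwards [Ioo_mem_nhds ht.1 ht.2] with s hs
      exact derivWithin_of_mem_nhds (Icc_mem_nhds hs.1 hs.2)
    have e2 : deriv v =ᶠ[𝓝 t] deriv (uu n k c) := by
      filter_upwards [Ioo_mem_nhds ht.1 ht.2] with s hs
      apply Filter.EventuallyEq.deriv_eq
      filter_upwards [Icc_mem_nhds hs.1 hs.2] with r hr
      exact (heq hr).symm
    calc D2 t = deriv (derivWithin v I) t := derivWithin_of_mem_nhds hIN
    _ = deriv (deriv v) t := e1.deriv_eq
    _ = deriv (deriv (uu n k c)) t := e2.deriv_eq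
  have ht2 : Tendsto (deriv (deriv (uu n k c))) (𝓝[<] (ell n k c)) (𝓝 (D2 (ell n k c))) :=
    ht1.congr' hEq
  exact not_tendsto_atTop_of_tendsto_nhds ht2 (deriv2_tendsto_top n k c hn hk2)

end NSB18

end NSB18

theorem nonsmooth_boundary_solution
    {n k : ℕ} (hn : 3 ≤ n) (hk2 : 2 ≤ k) (hkn : k ≤ n) :
    ∀ c : ℝ,
      ∃ ℓ : ℝ, 0 < ℓ ∧
        ∃ u : ℝ → ℝ,
          ContDiffOn ℝ 1 u (Icc (-ℓ) ℓ) ∧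
          ContDiffOn ℝ (⊤ : ℕ∞) u (Ioo (-ℓ) ℓ) ∧
          (∀ t ∈ Ioo (-ℓ) ℓ,
            0 < 1 - deriv u t ^ 2 ∧
            (1 - deriv u t ^ 2) ^ (k - 1) *
                (deriv (deriv u) t + (((n : ℝ) - 2 * k) / (2 * k)) * (1 - deriv u t ^ 2)) =
              ((n : ℝ) / (2 * k)) * Real.exp (-(2 * k : ℝ) * u t)) ∧
          u (-ℓ) = c ∧ u ℓ = c ∧
          Tendsto (deriv u) (𝓝[<] ℓ) (𝓝 1) ∧
          Tendsto (deriv u) (𝓝[>] (-ℓ)) (𝓝 (-1)) ∧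
          Tendsto (deriv (deriv u)) (𝓝[<] ℓ) atTop ∧
          Tendsto (deriv (deriv u)) (𝓝[>] (-ℓ)) atTop ∧
          ¬ ∃ v : ℝ → ℝ, ContDiffOn ℝ 2 v (Icc (-ℓ) ℓ) ∧ EqOn u v (Icc (-ℓ) ℓ) := by
  intro c
  have hn' : 0 < n := by omega
  have hk' : 0 < k := by omega
  refine ⟨NSB18.ell n k c, NSB18.ell_pos n k c hn' hk', NSB18.uu n k c,
    NSB18.uu_contDiffOn_one n k c hn' hk', NSB18.uu_contDiffOn n k c hn' hk', ?_,
    NSB18.uu_neg_ell n k c hn' hk', NSB18.uu_ell n k c hn' hk',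
    NSB18.deriv_uu_tendsto_top n k c hn' hk', NSB18.deriv_uu_tendsto_bot n k c hn' hk',
    NSB18.deriv2_tendsto_top n k c hn' hk2, NSB18.deriv2_tendsto_bot n k c hn' hk2,
    NSB18.no_C2_extension n k c hn' hk2⟩
  intro t ht
  have hp := NSB18.P_mem_Ioo n k c hn' hk' ht
  have hd : deriv (NSB18.uu n k c) t = NSB18.P n k c t := NSB18.deriv_uu n k c hn' hk' ht
  constructor
  · rw [hd]; exact NSB18.one_sub_sq_pos hp
  · rw [hd, NSB18.deriv2_uu n k c hn' hk' ht]
    have h := NSB18.key_identity n k c hn' hk2 hp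
    simpa [NSB18.uu] using h
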